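/- On the elliptic curve E : y^2 + txy + (t+2)y = x^3 over Q(t), the point (0,0) has order exactly 3, the point (-1,-1) has order exactly 2, and the point (t+2, t+2) has order exactly 6. -/

import Mathlib

/-!
Write `P = (0,0)`, `Q = (-1,-1)`, `R = (t+2,t+2)`. The tangent `y = 0` at `P` meets `E` only at `P`,
so `2P = -P` and `P` has order 3; the tangent at `Q` is vertical, so `Q` has order 2. The line
`y = x` through `P` and `R` meets `E` a third time at `Q = -Q`, so `P + R = Q`. Hence `R = Q - P`
is a sum of commuting elements of coprime orders 2 and 3, and has order 6.
-/

open WeierstrassCurve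

noncomputable def E : WeierstrassCurve.Affine (RatFunc ℚ) :=
  ⟨RatFunc.X, 0, RatFunc.X + 2, 0, 0⟩

open scoped Classical

open WeierstrassCurve.Affine WeierstrassCurve.Affine.Point RatFunc

theorem RatFunc.X_add_C_ne_zero {K : Type*} [Field K] (c : K) : (X + C c : RatFunc K) ≠ 0 := by
  rw [← algebraMap_X, ← algebraMap_C, ← map_add]
  exact algebraMap_ne_zero (Polynomial.X_add_C_ne_zero c)

theorem RatFunc.X_add_ofNat_ne_zero {K : Type*} [Field K] (n : ℕ) [n.AtLeastTwo] :
    (X + OfNat.ofNat n : RatFunc K) ≠ 0 := by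
  have h := X_add_C_ne_zero (n : K)
  rwa [map_natCast] at h

namespace E

theorem nonsingular_zero_zero : E.Nonsingular 0 0 := by
  rw [nonsingular_iff, equation_iff]
  simp only [E]
  exact ⟨by ring, Or.inr fun h => X_add_ofNat_ne_zero 2 (by linear_combination h)⟩

theorem nonsingular_neg_one_neg_one : E.Nonsingular (-1) (-1) := by
  rw [nonsingular_iff, equation_iff]
  simp only [E]
  exact ⟨by ring, Or.inl fun h => X_add_ofNat_ne_zero 3 (by linear_combination -h)⟩

theorem nonsingular_X_add_two_X_add_two : E.Nonsingular (X + 2) (X + 2) := by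
  rw [nonsingular_iff, equation_iff]
  simp only [E]
  exact ⟨by ring, Or.inr fun h =>
    mul_ne_zero (X_add_ofNat_ne_zero (K := ℚ) 2) (X_add_ofNat_ne_zero 3) (by linear_combination h)⟩

noncomputable def P : E.Point := .some _ _ nonsingular_zero_zero

noncomputable def Q : E.Point := .some _ _ nonsingular_neg_one_neg_one

noncomputable def R : E.Point := .some _ _ nonsingular_X_add_two_X_add_two

theorem two_nsmul_P : 2 • P = -P := by
  have hy : (0 : RatFunc ℚ) ≠ E.negY 0 0 := by
    simp only [negY, E]
    exact fun h => X_add_ofNat_ne_zero 2 (by linear_combination h)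
  have hslope : E.slope 0 0 0 0 = 0 := by
    rw [slope_of_Y_ne rfl hy]
    simp only [E]
    ring
  rw [two_nsmul, P, add_self_of_Y_ne hy, neg_some, Point.some.injEq, hslope]
  simp only [addY, negAddY, addX, negY, E]
  constructor <;> ring

theorem two_nsmul_Q : 2 • Q = 0 := by
  rw [two_nsmul]
  exact add_self_of_Y_eq (by simp only [negY, E]; ring)

theorem P_add_R : P + R = Q := by
  have hx : (0 : RatFunc ℚ) ≠ X + 2 := (X_add_ofNat_ne_zero 2).symm
  have hslope : E.slope 0 (X + 2) 0 (X + 2) = 1 := by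
    rw [slope_of_X_ne hx]
    exact div_self (sub_ne_zero.mpr hx)
  rw [P, R, Q, add_of_X_ne hx, Point.some.injEq, hslope]
  simp only [addY, negAddY, addX, negY, E]
  constructor <;> ring

theorem addOrderOf_P : addOrderOf P = 3 := by
  have : Fact (Nat.Prime 3) := ⟨Nat.prime_three⟩
  refine addOrderOf_eq_prime ?_ (some_ne_zero _)
  rw [show 3 = 2 + 1 from rfl, succ_nsmul, two_nsmul_P, neg_add_cancel]

theorem addOrderOf_Q : addOrderOf Q = 2 := by
  have : Fact (Nat.Prime 2) := ⟨Nat.prime_two⟩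
  exact addOrderOf_eq_prime two_nsmul_Q (some_ne_zero _)

theorem addOrderOf_R : addOrderOf R = 6 := by
  have hcoprime : (addOrderOf Q).Coprime (addOrderOf (-P)) := by
    rw [addOrderOf_neg, addOrderOf_P, addOrderOf_Q]
    rfl
  rw [eq_neg_add_of_add_eq P_add_R, add_comm,
    (AddCommute.all _ _).addOrderOf_add_eq_mul_addOrderOf_of_coprime hcoprime, addOrderOf_neg,
    addOrderOf_P, addOrderOf_Q]

end E

/-- On `y² + txy + (t+2)y = x³` over `ℚ(t)`: `(0,0)` has order 3, `(-1,-1)` has order 2,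
and `(t+2, t+2)` has order 6. -/
theorem torsion_orders :
    (∃ h : E.Nonsingular 0 0, addOrderOf (WeierstrassCurve.Affine.Point.some _ _ h) = 3) ∧
    (∃ h : E.Nonsingular (-1) (-1), addOrderOf (WeierstrassCurve.Affine.Point.some _ _ h) = 2) ∧
    (∃ h : E.Nonsingular (RatFunc.X + 2) (RatFunc.X + 2),
      addOrderOf (WeierstrassCurve.Affine.Point.some _ _ h) = 6) :=
  ⟨⟨_, E.addOrderOf_P⟩, ⟨_, E.addOrderOf_Q⟩, ⟨_, E.addOrderOf_R⟩⟩
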